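/- Let G be an n×n real matrix satisfying the algebraic Riccati equation G·R·G + Q·G + G·Q + P = 0 with diagonal n×n real matrices P, Q, R, and let M be a diagonal n×n real matrix with M² = R. Then the matrix G̃ = M·G·M + Q satisfies G̃² = Q² − P·R. In particular, when R is invertible the Riccati equation can be reduced to the canonical form G̃² = Δ with Δ = Q² − P·R by the transformation G ↦ M·G·M + Q. -/

import Mathlib

theorem Matrix.IsDiag.commute {n α : Type*} [Fintype n] [DecidableEq n]
    [NonUnitalNonAssocCommSemiring α] {A B : Matrix n n α} (hA : A.IsDiag) (hB : B.IsDiag) :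
    Commute A B := by
  rw [← hA.diagonal_diag, ← hB.diagonal_diag]
  exact Matrix.commute_diagonal _ _

theorem sq_mul_mul_add_eq_of_riccati {α : Type*} [Ring α] {G P Q R M : α}
    (hMP : Commute M P) (hMQ : Commute M Q)
    (hRic : G * R * G + Q * G + G * Q + P = 0) (hM2 : M ^ 2 = R) :
    (M * G * M + Q) ^ 2 = Q ^ 2 - P * R := by
  subst hM2
  have hP : P = -(G * M ^ 2 * G + Q * G + G * Q) := eq_neg_of_add_eq_zero_right hRic
  calc (M * G * M + Q) ^ 2
      = M * G * M ^ 2 * G * M + M * G * (M * Q) + Q * M * G * M + Q ^ 2 := by noncomm_ring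
    _ = M * G * M ^ 2 * G * M + M * G * (Q * M) + M * Q * G * M + Q ^ 2 := by rw [hMQ.eq]
    _ = M * (G * M ^ 2 * G + Q * G + G * Q) * M + Q ^ 2 := by noncomm_ring
    _ = -(M * P * M) + Q ^ 2 := by rw [hP]; noncomm_ring
    _ = Q ^ 2 - P * M ^ 2 := by rw [hMP.eq]; noncomm_ring

theorem stmt11_general {n : ℕ} (G P Q R M : Matrix (Fin n) (Fin n) ℝ)
    (hP : P.IsDiag) (hQ : Q.IsDiag) (hM : M.IsDiag)
    (hRic : G * R * G + Q * G + G * Q + P = 0)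
    (hM2 : M ^ 2 = R) :
    (M * G * M + Q) ^ 2 = Q ^ 2 - P * R :=
  sq_mul_mul_add_eq_of_riccati (hM.commute hP) (hM.commute hQ) hRic hM2

/-- Let `G` satisfy the algebraic Riccati equation
`G R G + Q G + G Q + P = 0` with diagonal `P, Q, R`, and let `M` be diagonal with
`M² = R`.  Then `G̃ = M G M + Q` satisfies `G̃² = Q² - P R`; in particular, when
`R` is invertible the Riccati equation reduces to the canonical form `G̃² = Δ`
with `Δ = Q² - P R`. -/
theorem stmt11 {n : ℕ} (G P Q R M : Matrix (Fin n) (Fin n) ℝ)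
    (hP : P.IsDiag) (hQ : Q.IsDiag) (hR : R.IsDiag) (hM : M.IsDiag)
    (hRic : G * R * G + Q * G + G * Q + P = 0)
    (hM2 : M ^ 2 = R) :
    (M * G * M + Q) ^ 2 = Q ^ 2 - P * R :=
  stmt11_general G P Q R M hP hQ hM hRic hM2
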